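/- Assume Σ contains at least two letters, k ≥ 1, and f : (Σ*)ᵏ → Σ* is RCP. If there exist words u₁ ≠ ε, …, u_k ≠ ε such that f(u₁, …, u_k) = ε, then f is constant with value ε. -/

import Mathlib

/-- A congruence on the free monoid `List S`: an equivalence relation compatible
with concatenation. -/
def IsCong {S : Type*} (r : List S → List S → Prop) : Prop :=
  Equivalence r ∧ ∀ x y u v : List S, r x y → r u v → r (x ++ u) (y ++ v)

/-- A monoid homomorphism from the free monoid `List S` to itself. -/
def IsHom {S : Type*} (φ : List S → List S) : Prop :=
  φ [] = [] ∧ ∀ x y : List S, φ (x ++ y) = φ x ++ φ y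

/-- A `k`-ary function is congruence preserving. -/
def IsCPK {S : Type*} (k : ℕ) (f : (Fin k → List S) → List S) : Prop :=
  ∀ r : List S → List S → Prop, IsCong r → ∀ x y : Fin k → List S,
    (∀ i, r (x i) (y i)) → r (f x) (f y)

/-- A `k`-ary function preserves all restricted congruences
(kernels of endomorphisms of the free monoid). -/
def IsRCPK {S : Type*} (k : ℕ) (f : (Fin k → List S) → List S) : Prop :=
  ∀ φ : List S → List S, IsHom φ → ∀ x y : Fin k → List S,
    (∀ i, φ (x i) = φ (y i)) → φ (f x) = φ (f y)

/-- `f (x₁, …, x_k) = w₀ x_{i₁}^{p₁} w₁ x_{i₂}^{p₂} w₂ ⋯ x_{iₙ}^{pₙ} wₙ`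
for fixed words `w₀, …, wₙ`, indices `i₁, …, iₙ` and exponents `p₁, …, pₙ`. -/
def PolyFormK {S : Type*} (k : ℕ) (f : (Fin k → List S) → List S) : Prop :=
  ∃ (n : ℕ) (w : ℕ → List S) (idx : ℕ → Fin k) (p : ℕ → ℕ), ∀ x : Fin k → List S,
    f x = w 0 ++ List.flatten ((List.range n).map fun j =>
      List.flatten (List.replicate (p (j + 1)) (x (idx (j + 1)))) ++ w (j + 1))

/-!
Sending every letter to a single letter `a` is an endomorphism whose kernel is "same length",
so `|f x|` is a function `g` of the lengths `|xᵢ|`. Erasing `a` shows that `f` maps tuples of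
powers of `a` into `a*` (since `f (a^{|u₁|}, …, a^{|u_k|}) = ε`), and likewise for a second
letter `b`. Splitting `f (a^{d₁} b^{n₁}, …)` into its `a`-letters and the rest then gives
`g (d + n) = g d + g n`. An additive `g : ℕᵏ → ℕ` vanishing at a strictly positive vector vanishes
on all its multiples, which dominate every vector, so `g = 0`.
-/

section Letters

variable {S : Type*}

theorem isHom_filter (p : S → Bool) : IsHom (List.filter p) :=
  ⟨rfl, List.filter_append⟩

theorem isHom_map (g : S → S) : IsHom (List.map g) :=
  ⟨rfl, fun _ _ => List.map_append⟩

end Letters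

section RCP

variable {S : Type*} {k : ℕ} {f : (Fin k → List S) → List S}

def replicateTuple (a : S) (n : Fin k → ℕ) : Fin k → List S :=
  fun i => List.replicate (n i) a

theorem IsRCPK.length_eq [Nonempty S] (hf : IsRCPK k f) {x y : Fin k → List S}
    (hxy : ∀ i, (x i).length = (y i).length) : (f x).length = (f y).length := by
  have h := hf (List.map fun _ => Classical.arbitrary S) (isHom_map _) x y
    (fun i => by simp only [List.map_const', hxy i])
  simpa only [List.map_const', List.length_replicate] using congrArg List.length h

theorem IsRCPK.length_eq_length_replicateTuple [Nonempty S] (hf : IsRCPK k f) (a : S)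
    (x : Fin k → List S) :
    (f x).length = (f (replicateTuple a fun i => (x i).length)).length :=
  hf.length_eq fun _ => (List.length_replicate ..).symm

variable [DecidableEq S]

theorem IsRCPK.forall_mem_replicateTuple_eq (hf : IsRCPK k f) {a : S} {m : Fin k → ℕ}
    (hm : f (replicateTuple a m) = []) (n : Fin k → ℕ) :
    ∀ c ∈ f (replicateTuple a n), c = a := by
  have h := hf (List.filter fun c => !decide (c = a)) (isHom_filter _)
    (replicateTuple a n) (replicateTuple a m) (fun i => by simp [replicateTuple])
  rw [hm, List.filter_nil, List.filter_eq_nil_iff] at h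
  simpa using h

/-- The `a`-letters of `f (a^{d₁} b^{n₁}, …)` are those of `f (a^{d₁}, …)`, the other letters
those of `f (b^{n₁}, …)`. -/
theorem IsRCPK.length_replicate_append_replicate (hf : IsRCPK k f) {a b : S} (hab : a ≠ b)
    (ha : ∀ n, ∀ c ∈ f (replicateTuple a n), c = a)
    (hb : ∀ n, ∀ c ∈ f (replicateTuple b n), c = b) (d n : Fin k → ℕ) :
    (f fun i => List.replicate (d i) a ++ List.replicate (n i) b).length =
      (f (replicateTuple a d)).length + (f (replicateTuple b n)).length := by
  have hfa := hf (List.filter fun c => decide (c = a)) (isHom_filter _)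
    (fun i => List.replicate (d i) a ++ List.replicate (n i) b) (replicateTuple a d)
    (fun i => by simp [replicateTuple, Ne.symm hab])
  have hfb := hf (List.filter fun c => !decide (c = a)) (isHom_filter _)
    (fun i => List.replicate (d i) a ++ List.replicate (n i) b) (replicateTuple b n)
    (fun i => by simp [replicateTuple, Ne.symm hab])
  have hfa' : (f (replicateTuple a d)).filter (fun c => decide (c = a)) =
      f (replicateTuple a d) := List.filter_eq_self.mpr (by simpa using ha d)
  have hfb' : (f (replicateTuple b n)).filter (fun c => !decide (c = a)) =
      f (replicateTuple b n) :=
    List.filter_eq_self.mpr fun c hc => by simp [hb n c hc, Ne.symm hab]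
  rw [List.length_eq_length_filter_add (fun c => decide (c = a)), hfa, hfb, hfa', hfb']

theorem IsRCPK.length_replicateTuple_add (hf : IsRCPK k f) {a b : S} (hab : a ≠ b)
    {m : Fin k → ℕ} (ha : f (replicateTuple a m) = []) (hb : f (replicateTuple b m) = [])
    (d n : Fin k → ℕ) :
    (f (replicateTuple a (d + n))).length =
      (f (replicateTuple a d)).length + (f (replicateTuple a n)).length := by
  have : Nonempty S := ⟨a⟩
  calc (f (replicateTuple a (d + n))).length
      = (f fun i => List.replicate (d i) a ++ List.replicate (n i) b).length :=
        hf.length_eq fun i => by simp [replicateTuple]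
    _ = (f (replicateTuple a d)).length + (f (replicateTuple b n)).length :=
        hf.length_replicate_append_replicate hab (hf.forall_mem_replicateTuple_eq ha)
          (hf.forall_mem_replicateTuple_eq hb) d n
    _ = (f (replicateTuple a d)).length + (f (replicateTuple a n)).length := by
        rw [hf.length_eq (x := replicateTuple b n) (y := replicateTuple a n)
          fun i => by simp [replicateTuple]]

end RCP

theorem AddMonoidHom.eq_zero_of_map_eq_zero_of_pos {ι : Type*} [Fintype ι]
    (g : (ι → ℕ) →+ ℕ) {m : ι → ℕ} (hm : ∀ i, 0 < m i) (hgm : g m = 0) (n : ι → ℕ) :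
    g n = 0 := by
  set c := ∑ i, n i
  have hle : n ≤ c • m := fun i =>
    calc n i ≤ c := Finset.single_le_sum (fun j _ => Nat.zero_le (n j)) (Finset.mem_univ i)
      _ ≤ c * m i := Nat.le_mul_of_pos_right c (hm i)
  have h := map_add g n (c • m - n)
  rw [add_tsub_cancel_of_le hle, map_nsmul, hgm, smul_zero] at h
  omega

theorem stmt_17_general {S : Type*} (hS : ∃ a b : S, a ≠ b) (k : ℕ)
    (f : (Fin k → List S) → List S) (hf : IsRCPK k f)
    (u : Fin k → List S) (hu : ∀ i, u i ≠ []) (hfu : f u = []) :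
    ∀ x : Fin k → List S, f x = [] := by
  classical
  obtain ⟨a, b, hab⟩ := hS
  have : Nonempty S := ⟨a⟩
  set m : Fin k → ℕ := fun i => (u i).length
  have hm (c : S) : f (replicateTuple c m) = [] := by
    rw [← List.length_eq_zero_iff, ← hf.length_eq_length_replicateTuple, hfu, List.length_nil]
  let g : (Fin k → ℕ) →+ ℕ :=
    { toFun := fun n => (f (replicateTuple a n)).length
      map_zero' := by simpa using hf.length_replicateTuple_add hab (hm a) (hm b) 0 0
      map_add' := hf.length_replicateTuple_add hab (hm a) (hm b) }
  intro x
  rw [← List.length_eq_zero_iff, hf.length_eq_length_replicateTuple a]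
  exact g.eq_zero_of_map_eq_zero_of_pos (fun i => List.length_pos_iff.mpr (hu i))
    (List.length_eq_zero_iff.mpr (hm a)) _

/-- If `S` has at least two letters, `k ≥ 1`, `f : (S*)ᵏ → S*` is RCP and
`f (u₁, …, u_k) = ε` for some nonempty words `u₁, …, u_k`, then `f` is constantly `ε`. -/
theorem stmt_17 {S : Type*} (hS : ∃ a b : S, a ≠ b) (k : ℕ) (hk : 1 ≤ k)
    (f : (Fin k → List S) → List S) (hf : IsRCPK k f)
    (u : Fin k → List S) (hu : ∀ i, u i ≠ []) (hfu : f u = []) :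
    ∀ x : Fin k → List S, f x = [] :=
  stmt_17_general hS k f hf u hu hfu
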